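/- arXiv:2001.09634 — 7 statements merged into one kernel-verified Lean document; each statement's English description precedes it below -/
import Mathlib

section
/- Suppose (g_n) is a sequence of positive rationals with g_2 given and g_{n+4} g_{|n−4|} = g_4² g_n² for all n ≡ 2 mod 4, n ≥ 2 (interpreting g_{|2−4|} = g_2). Then for every n ≡ 2 mod 4, g_n = g_2 · g_4^{(n²−4)/16}. -/
/-!
With `a k = g (4k+2)` and `c = g 4`, the recurrence says that the ratios `a (k+1) / a k` grow
geometrically by the factor `c²`, starting from `a 1 / a 0 = c²` (the case `n = 2`, where
`|n - 4| = 2`). Hence `a k = a 0 * c^(k(k+1))`, and `k(k+1) = ((4k+2)² - 4)/16`.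
-/

theorem eq_mul_pow_of_mul_eq_sq_mul_sq {M : Type*} [CommMonoidWithZero M]
    [IsRightCancelMulZero M]
    {a : ℕ → M} {c : M} (ha : ∀ k, a k ≠ 0) (h₁ : a 1 = c ^ 2 * a 0)
    (hrec : ∀ k, a (k + 2) * a k = c ^ 2 * a (k + 1) ^ 2) :
    ∀ k, a k = a 0 * c ^ (k * (k + 1)) := by
  intro k
  induction k using Nat.twoStepInduction with
  | zero => simp
  | one => rw [h₁, mul_comm]
  | more k ih₀ ih₁ =>
    refine mul_right_cancel₀ (ha k) ((hrec k).trans ?_)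
    rw [ih₀, ih₁]
    calc c ^ 2 * (a 0 * c ^ ((k + 1) * (k + 2))) ^ 2
        = a 0 ^ 2 * c ^ (2 + (k + 1) * (k + 2) * 2) := by
          rw [pow_add, pow_mul c _ 2, mul_pow, mul_left_comm]
      _ = a 0 ^ 2 * c ^ ((k + 2) * (k + 3) + k * (k + 1)) := by ring_nf
      _ = a 0 * c ^ ((k + 2) * (k + 3)) * (a 0 * c ^ (k * (k + 1))) := by
        rw [pow_add, mul_mul_mul_comm, sq]

theorem sq_sub_four_div_sixteen (k : ℕ) : ((4 * k + 2) ^ 2 - 4) / 16 = k * (k + 1) := by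
  have : (4 * k + 2) ^ 2 = 16 * (k * (k + 1)) + 4 := by ring
  rw [this, Nat.add_sub_cancel, Nat.mul_div_cancel_left _ (by norm_num)]

/-- Suppose `(gₙ)` is a sequence of positive rationals with
`g (n+4) * g |n−4| = (g 4)² * (g n)²` for all `n ≡ 2 mod 4`, `n ≥ 2`. Then for every
`n ≡ 2 mod 4`, `g n = g 2 * (g 4) ^ ((n²−4)/16)`. -/
theorem stmt_8 (g : ℕ → ℚ) (hpos : ∀ n, 0 < g n)
    (hrec : ∀ n : ℕ, 2 ≤ n → n % 4 = 2 →
      g (n + 4) * g (((n : ℤ) - 4).natAbs) = (g 4) ^ 2 * (g n) ^ 2) :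
    ∀ n : ℕ, n % 4 = 2 → g n = g 2 * (g 4) ^ ((n ^ 2 - 4) / 16) := by
  have h₁ : g 6 = g 4 ^ 2 * g 2 := by
    refine mul_right_cancel₀ (hpos 2).ne' ((hrec 2 le_rfl rfl).trans ?_)
    ring
  have hstep (k : ℕ) :
      g (4 * (k + 2) + 2) * g (4 * k + 2) = g 4 ^ 2 * g (4 * (k + 1) + 2) ^ 2 := by
    have habs : (((4 * k + 6 : ℕ) : ℤ) - 4).natAbs = 4 * k + 2 := by omega
    rw [show 4 * (k + 2) + 2 = 4 * k + 6 + 4 by ring, show 4 * (k + 1) + 2 = 4 * k + 6 by ring,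
      ← habs]
    exact hrec (4 * k + 6) (by omega) (by omega)
  intro n hn
  obtain ⟨k, rfl⟩ : ∃ k, n = 4 * k + 2 := ⟨n / 4, by omega⟩
  rw [sq_sub_four_div_sixteen]
  exact eq_mul_pow_of_mul_eq_sq_mul_sq (a := fun k ↦ g (4 * k + 2)) (fun _ ↦ (hpos _).ne') h₁
    hstep k
end

section
/- Define sequences by h_1 = 1, h_2 = 2, h_3 = −4, h_4 = −32 and the recurrences h_{4k+1} = −h_{2k−1} h_{2k+1}³, h_{4k+3} = h_{2k+3} h_{2k+1}³, h_{4k} = (h_{2k}/2)(h_{2k+2} h_{2k−1}² − h_{2k−2} h_{2k+1}²) for k ≥ 2, and h_{4k+2} = (h_{2k+1}/2)(h_{2k+3} h_{2k}² − h_{2k−1} h_{2k+2}²) for k ≥ 1. Then h_{2k} = (−1)^{k−1} k 2^{k²} and h_{2k+1} = (−1)^k 2^{k(k+1)} for all k ≥ 0 (resp. k ≥ 1). -/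
/-!
Every index on the right-hand side of the recurrences is positive and smaller than the one on the
left, so the recurrences determine `h n` for all `n ≥ 1` from `h 1, …, h 4`. It therefore suffices
to check that the closed form satisfies them; after splitting by the parity of the indices this
is a polynomial identity in `k` and the powers `(-1) ^ k`, `2 ^ k`, `2 ^ (k ^ 2)`.
-/

def DivisionRecurrence (h : ℕ → ℤ) : Prop :=
  (∀ k : ℕ, 1 ≤ k → h (4 * k + 1) = -(h (2 * k - 1)) * (h (2 * k + 1)) ^ 3) ∧
  (∀ k : ℕ, 1 ≤ k → h (4 * k + 3) = h (2 * k + 3) * (h (2 * k + 1)) ^ 3) ∧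
  (∀ k : ℕ, 2 ≤ k → 2 * h (4 * k) =
    h (2 * k) * (h (2 * k + 2) * (h (2 * k - 1)) ^ 2 - h (2 * k - 2) * (h (2 * k + 1)) ^ 2)) ∧
  (∀ k : ℕ, 1 ≤ k → 2 * h (4 * k + 2) =
    h (2 * k + 1) * (h (2 * k + 3) * (h (2 * k)) ^ 2 - h (2 * k - 1) * (h (2 * k + 2)) ^ 2))

theorem DivisionRecurrence.eq_of_le_four {h g : ℕ → ℤ} (hh : DivisionRecurrence h)
    (hg : DivisionRecurrence g) (hbase : ∀ n, 1 ≤ n → n ≤ 4 → h n = g n) :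
    ∀ n, 1 ≤ n → h n = g n := by
  obtain ⟨h1, h3, h0, h2⟩ := hh
  obtain ⟨g1, g3, g0, g2⟩ := hg
  intro n
  induction n using Nat.strong_induction_on with
  | _ n ih =>
    intro hn
    by_cases hn4 : n ≤ 4
    · exact hbase n hn hn4
    have e : ∀ m, 1 ≤ m → m < n → h m = g m := fun m hm hmn => ih m hmn hm
    obtain ⟨k, r, hr, rfl⟩ : ∃ k r, r < 4 ∧ n = 4 * k + r :=
      ⟨n / 4, n % 4, Nat.mod_lt _ (by norm_num), (Nat.div_add_mod n 4).symm⟩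
    interval_cases r
    · refine mul_left_cancel₀ two_ne_zero ?_
      rw [add_zero, h0 k (by omega), g0 k (by omega), e (2 * k) (by omega) (by omega),
        e (2 * k + 2) (by omega) (by omega), e (2 * k - 1) (by omega) (by omega),
        e (2 * k - 2) (by omega) (by omega), e (2 * k + 1) (by omega) (by omega)]
    · rw [h1 k (by omega), g1 k (by omega), e (2 * k - 1) (by omega) (by omega),
        e (2 * k + 1) (by omega) (by omega)]
    · refine mul_left_cancel₀ two_ne_zero ?_
      rw [h2 k (by omega), g2 k (by omega), e (2 * k) (by omega) (by omega),
        e (2 * k + 2) (by omega) (by omega), e (2 * k - 1) (by omega) (by omega),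
        e (2 * k + 3) (by omega) (by omega), e (2 * k + 1) (by omega) (by omega)]
    · rw [h3 k (by omega), g3 k (by omega), e (2 * k + 3) (by omega) (by omega),
        e (2 * k + 1) (by omega) (by omega)]

def oddClosedForm (k : ℕ) : ℤ := (-1) ^ k * 2 ^ (k * (k + 1))

def evenClosedForm (k : ℕ) : ℤ := (-1) ^ (k - 1) * (k : ℤ) * 2 ^ (k ^ 2)

def closedForm (n : ℕ) : ℤ := if Even n then evenClosedForm (n / 2) else oddClosedForm (n / 2)

theorem closedForm_two_mul (k : ℕ) : closedForm (2 * k) = evenClosedForm k := by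
  simp [closedForm]

theorem closedForm_two_mul_add_one (k : ℕ) : closedForm (2 * k + 1) = oddClosedForm k := by
  simp [closedForm, Nat.mul_add_div]

theorem oddClosedForm_two_mul_add_two (k : ℕ) :
    oddClosedForm (2 * k + 2) = -oddClosedForm k * oddClosedForm (k + 1) ^ 3 := by
  unfold oddClosedForm; ring_nf; simp [pow_mul']

theorem oddClosedForm_two_mul_add_one (k : ℕ) :
    oddClosedForm (2 * k + 1) = oddClosedForm (k + 1) * oddClosedForm k ^ 3 := by
  unfold oddClosedForm; ring_nf; simp [pow_mul']

theorem evenClosedForm_two_mul_add_four (k : ℕ) :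
    2 * evenClosedForm (2 * k + 4) = evenClosedForm (k + 2) *
      (evenClosedForm (k + 3) * oddClosedForm (k + 1) ^ 2 -
        evenClosedForm (k + 1) * oddClosedForm (k + 2) ^ 2) := by
  simp only [evenClosedForm, oddClosedForm, show 2 * k + 4 - 1 = 2 * k + 3 by omega,
    Nat.add_one_sub_one]
  push_cast; ring_nf; simp [pow_mul']

theorem evenClosedForm_two_mul_add_three (k : ℕ) :
    2 * evenClosedForm (2 * k + 3) = oddClosedForm (k + 1) *
      (oddClosedForm (k + 2) * evenClosedForm (k + 1) ^ 2 -
        oddClosedForm k * evenClosedForm (k + 2) ^ 2) := by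
  simp only [evenClosedForm, oddClosedForm, show 2 * k + 3 - 1 = 2 * k + 2 by omega,
    Nat.add_one_sub_one]
  push_cast; ring_nf; simp [pow_mul']

theorem closedForm_divisionRecurrence : DivisionRecurrence closedForm := by
  refine ⟨fun k hk => ?_, fun k _ => ?_, fun k hk => ?_, fun k hk => ?_⟩
  · obtain ⟨j, rfl⟩ := Nat.exists_eq_add_of_le' hk
    rw [show 4 * (j + 1) + 1 = 2 * (2 * j + 2) + 1 by ring,
      show 2 * (j + 1) - 1 = 2 * j + 1 by omega]
    simp only [closedForm_two_mul_add_one, oddClosedForm_two_mul_add_two]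
  · rw [show 4 * k + 3 = 2 * (2 * k + 1) + 1 by ring, show 2 * k + 3 = 2 * (k + 1) + 1 by ring]
    simp only [closedForm_two_mul_add_one, oddClosedForm_two_mul_add_one]
  · obtain ⟨j, rfl⟩ := Nat.exists_eq_add_of_le' hk
    rw [show 4 * (j + 2) = 2 * (2 * j + 4) by ring, show 2 * (j + 2) - 1 = 2 * (j + 1) + 1 by omega,
      show 2 * (j + 2) - 2 = 2 * (j + 1) by omega, show 2 * (j + 2) + 2 = 2 * (j + 3) by ring]
    simp only [closedForm_two_mul_add_one, closedForm_two_mul, evenClosedForm_two_mul_add_four]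
  · obtain ⟨j, rfl⟩ := Nat.exists_eq_add_of_le' hk
    rw [show 4 * (j + 1) + 2 = 2 * (2 * j + 3) by ring, show 2 * (j + 1) - 1 = 2 * j + 1 by omega,
      show 2 * (j + 1) + 3 = 2 * (j + 2) + 1 by ring, show 2 * (j + 1) + 2 = 2 * (j + 2) by ring]
    simp only [closedForm_two_mul_add_one, closedForm_two_mul, evenClosedForm_two_mul_add_three]

/-- If `h 1 = 1`, `h 2 = 2`, `h 3 = −4`, `h 4 = −32` and `h` satisfies the recurrences
`h (4k+1) = −h (2k−1) h (2k+1)³`, `h (4k+3) = h (2k+3) h (2k+1)³`,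
`h (4k) = (h (2k)/2)(h (2k+2) h (2k−1)² − h (2k−2) h (2k+1)²)` for `k ≥ 2`, and
`h (4k+2) = (h (2k+1)/2)(h (2k+3) h (2k)² − h (2k−1) h (2k+2)²)` for `k ≥ 1`,
then `h (2k) = (−1)^(k−1) k 2^(k²)` for `k ≥ 1` and `h (2k+1) = (−1)^k 2^(k(k+1))`
for `k ≥ 0`. -/
theorem stmt_10 (h : ℕ → ℤ)
    (h1 : h 1 = 1) (h2 : h 2 = 2) (h3 : h 3 = -4) (h4 : h 4 = -32)
    (hr1 : ∀ k : ℕ, 1 ≤ k → h (4 * k + 1) = -(h (2 * k - 1)) * (h (2 * k + 1)) ^ 3)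
    (hr2 : ∀ k : ℕ, 1 ≤ k → h (4 * k + 3) = h (2 * k + 3) * (h (2 * k + 1)) ^ 3)
    (hr3 : ∀ k : ℕ, 2 ≤ k → 2 * h (4 * k) =
      h (2 * k) * (h (2 * k + 2) * (h (2 * k - 1)) ^ 2 - h (2 * k - 2) * (h (2 * k + 1)) ^ 2))
    (hr4 : ∀ k : ℕ, 1 ≤ k → 2 * h (4 * k + 2) =
      h (2 * k + 1) * (h (2 * k + 3) * (h (2 * k)) ^ 2 - h (2 * k - 1) * (h (2 * k + 2)) ^ 2)) :
    (∀ k : ℕ, 1 ≤ k → h (2 * k) = (-1) ^ (k - 1) * (k : ℤ) * 2 ^ (k ^ 2)) ∧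
      (∀ k : ℕ, h (2 * k + 1) = (-1) ^ k * 2 ^ (k * (k + 1))) := by
  have hbase : ∀ n, 1 ≤ n → n ≤ 4 → h n = closedForm n := by
    intro n hn hn4
    interval_cases n <;> simp [closedForm, evenClosedForm, oddClosedForm, Nat.even_iff, h1, h2, h3, h4]
  have heq := DivisionRecurrence.eq_of_le_four ⟨hr1, hr2, hr3, hr4⟩
    closedForm_divisionRecurrence hbase
  refine ⟨fun k hk => ?_, fun k => ?_⟩
  · rw [heq _ (by omega), closedForm_two_mul, evenClosedForm]
  · rw [heq _ (by omega), closedForm_two_mul_add_one, oddClosedForm]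
end

section
/- Define sequences by j_1 = 1, j_2 = 2, j_3 = −1, j_4 = −4 and the recurrences j_{4k+1} = −j_{2k−1} j_{2k+1}³, j_{4k+3} = j_{2k+3} j_{2k+1}³, j_{4k} = (j_{2k}/2)(j_{2k+2} j_{2k−1}² − j_{2k−2} j_{2k+1}²) for k ≥ 2, and j_{4k+2} = (j_{2k+1}/2)(j_{2k+3} j_{2k}² − j_{2k−1} j_{2k+2}²) for k ≥ 1. Then j_{2k} = (−1)^{k−1} · 2k and j_{2k+1} = (−1)^k for all k. -/
/-!
The recurrences determine `j n` for every `n ≥ 1` from `j 1, …, j 4`, since each right-hand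
side only involves smaller positive indices (and the factor `2` on the left cancels in `ℤ`).
So it suffices to check that the closed form, `-(-1)^k · 2k` at `2k` and `(-1)^k` at `2k+1`,
satisfies the same initial values and recurrences; after substituting, each recurrence is a
polynomial identity in `k` and the sign `(-1)^k = ±1`.
-/

structure IsJSequence (j : ℕ → ℤ) : Prop where
  one : j 1 = 1
  two : j 2 = 2
  three : j 3 = -1
  four : j 4 = -4
  four_mul_add_one : ∀ k : ℕ, 1 ≤ k → j (4 * k + 1) = -(j (2 * k - 1)) * (j (2 * k + 1)) ^ 3
  four_mul_add_three : ∀ k : ℕ, 1 ≤ k → j (4 * k + 3) = j (2 * k + 3) * (j (2 * k + 1)) ^ 3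
  four_mul : ∀ k : ℕ, 2 ≤ k → 2 * j (4 * k) =
    j (2 * k) * (j (2 * k + 2) * (j (2 * k - 1)) ^ 2 - j (2 * k - 2) * (j (2 * k + 1)) ^ 2)
  four_mul_add_two : ∀ k : ℕ, 1 ≤ k → 2 * j (4 * k + 2) =
    j (2 * k + 1) * (j (2 * k + 3) * (j (2 * k)) ^ 2 - j (2 * k - 1) * (j (2 * k + 2)) ^ 2)

theorem IsJSequence.eq_of_pos {j j' : ℕ → ℤ} (hj : IsJSequence j) (hj' : IsJSequence j') :
    ∀ n, 1 ≤ n → j n = j' n := by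
  intro n
  induction n using Nat.strong_induction_on with
  | _ n ih =>
  intro hn
  by_cases hsmall : n ≤ 4
  · interval_cases n
    exacts [hj.one.trans hj'.one.symm, hj.two.trans hj'.two.symm,
      hj.three.trans hj'.three.symm, hj.four.trans hj'.four.symm]
  obtain ⟨k, r, hr, rfl⟩ : ∃ k r, r < 4 ∧ n = 4 * k + r :=
    ⟨n / 4, n % 4, Nat.mod_lt _ (by norm_num), (Nat.div_add_mod n 4).symm⟩
  have ih' : ∀ m, 1 ≤ m → m < 4 * k + r → j m = j' m := fun m h1 h2 => ih m h2 h1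
  interval_cases r
  · have h := hj.four_mul k (by omega)
    rw [ih' (2 * k) (by omega) (by omega), ih' (2 * k + 2) (by omega) (by omega),
      ih' (2 * k - 1) (by omega) (by omega), ih' (2 * k - 2) (by omega) (by omega),
      ih' (2 * k + 1) (by omega) (by omega), ← hj'.four_mul k (by omega)] at h
    simpa using h
  · rw [hj.four_mul_add_one k (by omega), hj'.four_mul_add_one k (by omega),
      ih' (2 * k - 1) (by omega) (by omega), ih' (2 * k + 1) (by omega) (by omega)]
  · have h := hj.four_mul_add_two k (by omega)
    rw [ih' (2 * k) (by omega) (by omega), ih' (2 * k + 2) (by omega) (by omega),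
      ih' (2 * k - 1) (by omega) (by omega), ih' (2 * k + 3) (by omega) (by omega),
      ih' (2 * k + 1) (by omega) (by omega), ← hj'.four_mul_add_two k (by omega)] at h
    simpa using h
  · rw [hj.four_mul_add_three k (by omega), hj'.four_mul_add_three k (by omega),
      ih' (2 * k + 3) (by omega) (by omega), ih' (2 * k + 1) (by omega) (by omega)]

def jClosedForm (n : ℕ) : ℤ := if Even n then -(-1) ^ (n / 2) * n else (-1) ^ (n / 2)

theorem jClosedForm_two_mul (k : ℕ) : jClosedForm (2 * k) = -(-1) ^ k * (2 * k) := by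
  simp [jClosedForm]

theorem jClosedForm_two_mul_add_one (k : ℕ) : jClosedForm (2 * k + 1) = (-1) ^ k := by
  simp [jClosedForm, Nat.mul_add_div]

theorem jClosedForm_four_mul_add_one {k : ℕ} (hk : 1 ≤ k) :
    jClosedForm (4 * k + 1) = -(jClosedForm (2 * k - 1)) * (jClosedForm (2 * k + 1)) ^ 3 := by
  obtain ⟨m, rfl⟩ := Nat.exists_eq_add_of_le' hk
  rw [show 4 * (m + 1) + 1 = 2 * (2 * (m + 1)) + 1 by ring,
    show 2 * (m + 1) - 1 = 2 * m + 1 by omega,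
    jClosedForm_two_mul_add_one, jClosedForm_two_mul_add_one, jClosedForm_two_mul_add_one]
  rcases neg_one_pow_eq_or ℤ m with h | h <;> simp [pow_add, pow_mul', h]

theorem jClosedForm_four_mul_add_three (k : ℕ) :
    jClosedForm (4 * k + 3) = jClosedForm (2 * k + 3) * (jClosedForm (2 * k + 1)) ^ 3 := by
  rw [show 4 * k + 3 = 2 * (2 * k + 1) + 1 by ring, show 2 * k + 3 = 2 * (k + 1) + 1 by ring,
    jClosedForm_two_mul_add_one, jClosedForm_two_mul_add_one, jClosedForm_two_mul_add_one]
  rcases neg_one_pow_eq_or ℤ k with h | h <;> simp [pow_add, pow_mul', h]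

theorem jClosedForm_four_mul {k : ℕ} (hk : 1 ≤ k) :
    2 * jClosedForm (4 * k) = jClosedForm (2 * k) * (jClosedForm (2 * k + 2) *
      (jClosedForm (2 * k - 1)) ^ 2 - jClosedForm (2 * k - 2) * (jClosedForm (2 * k + 1)) ^ 2) := by
  obtain ⟨m, rfl⟩ := Nat.exists_eq_add_of_le' hk
  rw [show 4 * (m + 1) = 2 * (2 * (m + 1)) by ring, show 2 * (m + 1) + 2 = 2 * (m + 2) by ring,
    show 2 * (m + 1) - 1 = 2 * m + 1 by omega, show 2 * (m + 1) - 2 = 2 * m by omega,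
    jClosedForm_two_mul, jClosedForm_two_mul, jClosedForm_two_mul, jClosedForm_two_mul,
    jClosedForm_two_mul_add_one, jClosedForm_two_mul_add_one]
  rcases neg_one_pow_eq_or ℤ m with h | h <;> simp only [pow_add, pow_mul', h] <;> push_cast <;>
    ring

theorem jClosedForm_four_mul_add_two {k : ℕ} (hk : 1 ≤ k) :
    2 * jClosedForm (4 * k + 2) = jClosedForm (2 * k + 1) * (jClosedForm (2 * k + 3) *
      (jClosedForm (2 * k)) ^ 2 - jClosedForm (2 * k - 1) * (jClosedForm (2 * k + 2)) ^ 2) := by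
  obtain ⟨m, rfl⟩ := Nat.exists_eq_add_of_le' hk
  rw [show 4 * (m + 1) + 2 = 2 * (2 * m + 3) by ring, show 2 * (m + 1) + 2 = 2 * (m + 2) by ring,
    show 2 * (m + 1) - 1 = 2 * m + 1 by omega, show 2 * (m + 1) + 3 = 2 * (m + 2) + 1 by ring,
    jClosedForm_two_mul, jClosedForm_two_mul, jClosedForm_two_mul,
    jClosedForm_two_mul_add_one, jClosedForm_two_mul_add_one, jClosedForm_two_mul_add_one]
  rcases neg_one_pow_eq_or ℤ m with h | h <;> simp only [pow_add, pow_mul', h] <;> push_cast <;>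
    ring

theorem isJSequence_jClosedForm : IsJSequence jClosedForm where
  one := by decide
  two := by decide
  three := by decide
  four := by decide
  four_mul_add_one _ hk := jClosedForm_four_mul_add_one hk
  four_mul_add_three k _ := jClosedForm_four_mul_add_three k
  four_mul _ hk := jClosedForm_four_mul (by omega)
  four_mul_add_two _ hk := jClosedForm_four_mul_add_two hk

/-- If `j 1 = 1`, `j 2 = 2`, `j 3 = −1`, `j 4 = −4` and `j` satisfies the recurrences
`j (4k+1) = −j (2k−1) j (2k+1)³`, `j (4k+3) = j (2k+3) j (2k+1)³`,
`j (4k) = (j (2k)/2)(j (2k+2) j (2k−1)² − j (2k−2) j (2k+1)²)` for `k ≥ 2`, and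
`j (4k+2) = (j (2k+1)/2)(j (2k+3) j (2k)² − j (2k−1) j (2k+2)²)` for `k ≥ 1`,
then `j (2k) = (−1)^(k−1) · 2k` and `j (2k+1) = (−1)^k` for all `k`. -/
theorem stmt_11 (j : ℕ → ℤ)
    (j1 : j 1 = 1) (j2 : j 2 = 2) (j3 : j 3 = -1) (j4 : j 4 = -4)
    (hr1 : ∀ k : ℕ, 1 ≤ k → j (4 * k + 1) = -(j (2 * k - 1)) * (j (2 * k + 1)) ^ 3)
    (hr2 : ∀ k : ℕ, 1 ≤ k → j (4 * k + 3) = j (2 * k + 3) * (j (2 * k + 1)) ^ 3)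
    (hr3 : ∀ k : ℕ, 2 ≤ k → 2 * j (4 * k) =
      j (2 * k) * (j (2 * k + 2) * (j (2 * k - 1)) ^ 2 - j (2 * k - 2) * (j (2 * k + 1)) ^ 2))
    (hr4 : ∀ k : ℕ, 1 ≤ k → 2 * j (4 * k + 2) =
      j (2 * k + 1) * (j (2 * k + 3) * (j (2 * k)) ^ 2 - j (2 * k - 1) * (j (2 * k + 2)) ^ 2)) :
    (∀ k : ℕ, 1 ≤ k → j (2 * k) = (-1) ^ (k - 1) * (2 * (k : ℤ))) ∧
      (∀ k : ℕ, j (2 * k + 1) = (-1) ^ k) := by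
  have hj : IsJSequence j := ⟨j1, j2, j3, j4, hr1, hr2, hr3, hr4⟩
  have hclosed := hj.eq_of_pos isJSequence_jClosedForm
  refine ⟨fun k hk => ?_, fun k => ?_⟩
  · obtain ⟨m, rfl⟩ := Nat.exists_eq_add_of_le' hk
    rw [hclosed _ (by omega), jClosedForm_two_mul, Nat.add_sub_cancel, pow_succ]
    ring
  · rw [hclosed _ (by omega), jClosedForm_two_mul_add_one]
end

section
/- Let Λ = ℤ + ℤi and G_4 = ∑_{ω ∈ Λ \ {0}} ω^{−4}. Then 1 ≤ |15 G_4| ≤ 128. -/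
open Complex

/-!
Split `G₄` into the nine points with `|a|, |b| ≤ 1` and a tail. The units contribute `1` each
and the four points `±1 ± i` contribute `(-4)⁻¹` each, so the box gives `3`. Off the box,
`(a² + 1)(b² + 1) ≤ (5/2)(a² + b²)²`, with equality at `(2, 1)`, so the tail is at most `2/5` of
the tail of the product series `∑ 1/((a² + 1)(b² + 1)) = t²`, where `t = ∑ₙ 1/(n² + 1)`.
Comparing with `ζ(2)` gives `t ≤ π²/3 < 3.31`, hence `|G₄ - 3| ≤ (2/5)(t² - 4) < 2.8`.
-/

theorem norm_tsum_sub_sum_le {ι E : Type*} [NormedAddCommGroup E] [CompleteSpace E]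
    {f : ι → E} {g : ι → ℝ} (s : Finset ι) (hg : Summable g) (hfg : ∀ i ∉ s, ‖f i‖ ≤ g i) :
    ‖∑' i, f i - ∑ i ∈ s, f i‖ ≤ ∑' i, g i - ∑ i ∈ s, g i := by
  have hgc : Summable fun i : ↥(↑s : Set ι)ᶜ => g i := hg.subtype _
  have hf : Summable f := (s.summable_compl_iff).1 (hgc.of_norm_bounded fun i => hfg i i.2)
  rw [← hf.sum_add_tsum_compl, ← hg.sum_add_tsum_compl, add_sub_cancel_left, add_sub_cancel_left]
  exact tsum_of_norm_bounded hgc.hasSum fun i => hfg i i.2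

theorem summable_one_div_int_sq_add_one : Summable fun n : ℤ => 1 / ((n : ℝ) ^ 2 + 1) := by
  refine (Real.summable_one_div_int_pow.2 one_lt_two).of_norm_bounded_eventually ?_
  filter_upwards [Filter.eventually_cofinite_ne 0] with n hn
  rw [Real.norm_of_nonneg (by positivity)]
  gcongr
  linarith

theorem tsum_one_div_pnat_sq_add_one_le :
    ∑' n : ℕ+, 1 / ((n : ℝ) ^ 2 + 1) ≤ Real.pi ^ 2 / 6 - 1 / 2 := by
  have hzeta : ∑' n : ℕ+, 1 / (n : ℝ) ^ 2 = Real.pi ^ 2 / 6 := by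
    rw [tsum_pnat_eq_tsum_of_eq_zero (f := fun n : ℕ => 1 / (n : ℝ) ^ 2) (by simp),
      hasSum_zeta_two.tsum_eq]
  have hs₁ : Summable fun n : ℕ+ => 1 / (n : ℝ) ^ 2 :=
    hasSum_zeta_two.summable.comp_injective PNat.coe_injective
  have hs₂ : Summable fun n : ℕ+ => 1 / ((n : ℝ) ^ 2 + 1) :=
    (summable_one_div_int_sq_add_one.comp_injective
      (Nat.cast_injective.comp PNat.coe_injective) :)
  -- the term `n = 1` alone accounts for the gap `1 - 1/2`
  have hgap : 1 / 2 ≤ ∑' n : ℕ+, (1 / (n : ℝ) ^ 2 - 1 / ((n : ℝ) ^ 2 + 1)) := by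
    refine le_trans (by norm_num) ((hs₁.sub hs₂).le_tsum 1 fun n _ => ?_)
    have : (0 : ℝ) < n := by exact_mod_cast n.pos
    rw [sub_nonneg]
    gcongr
    linarith
  rw [hs₁.tsum_sub hs₂, hzeta] at hgap
  linarith

theorem tsum_one_div_int_sq_add_one_le :
    ∑' n : ℤ, 1 / ((n : ℝ) ^ 2 + 1) ≤ Real.pi ^ 2 / 3 := by
  rw [tsum_int_eq_zero_add_two_mul_tsum_pnat (fun n => by simp) summable_one_div_int_sq_add_one]
  push_cast [nsmul_eq_mul]
  linarith [tsum_one_div_pnat_sq_add_one_le]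

noncomputable def gaussianTerm (z : ℤ × ℤ) : ℂ := 1 / ((z.1 : ℂ) + (z.2 : ℂ) * I) ^ 4

theorem norm_gaussianTerm (z : ℤ × ℤ) :
    ‖gaussianTerm z‖ = 1 / ((z.1 : ℝ) ^ 2 + (z.2 : ℝ) ^ 2) ^ 2 := by
  have h : (z.1 : ℂ) + (z.2 : ℂ) * I = ((z.1 : ℝ) : ℂ) + ((z.2 : ℝ) : ℂ) * I := by push_cast; rfl
  rw [gaussianTerm, norm_div, norm_one, norm_pow, h, show 4 = 2 * 2 from rfl, pow_mul,
    Complex.sq_norm, Complex.normSq_add_mul_I]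

theorem gaussianTerm_of_sq_eq_one {a b : ℤ} (ha : a ^ 2 = 1) (hb : b ^ 2 = 1) :
    gaussianTerm (a, b) = -1 / 4 := by
  have ha' : (a : ℂ) ^ 2 = 1 := by exact_mod_cast ha
  have hb' : (b : ℂ) ^ 2 = 1 := by exact_mod_cast hb
  have hsq : ((a : ℂ) + b * I) ^ 2 = 2 * a * b * I := by
    linear_combination ha' + (b : ℂ) ^ 2 * I_sq - hb'
  have h4 : ((a : ℂ) + b * I) ^ 4 = -4 := by
    rw [show 4 = 2 * 2 from rfl, pow_mul, hsq]
    linear_combination 4 * (a : ℂ) ^ 2 * b ^ 2 * I_sq - 4 * (a : ℂ) ^ 2 * hb' - 4 * ha'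
  rw [gaussianTerm, h4]
  norm_num

theorem sum_gaussianTerm_Icc : ∑ z ∈ Finset.Icc (-1 : ℤ × ℤ) 1, gaussianTerm z = 3 := by
  rw [show Finset.Icc (-1 : ℤ × ℤ) 1 = Finset.Icc (-1) 1 ×ˢ Finset.Icc (-1) 1 from rfl,
    show Finset.Icc (-1 : ℤ) 1 = {-1, 0, 1} by decide, Finset.sum_product]
  simp (disch := decide) only [Finset.sum_insert, Finset.sum_singleton]
  simp (disch := norm_num) only [gaussianTerm_of_sq_eq_one]
  norm_num [gaussianTerm]

theorem five_mul_sq_add_one_mul_sq_add_one_le {a b : ℤ} (ha : 2 ≤ |a|) :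
    5 * ((a ^ 2 + 1) * (b ^ 2 + 1)) ≤ 2 * (a ^ 2 + b ^ 2) ^ 2 := by
  have ha4 : 4 ≤ a ^ 2 := by nlinarith [sq_abs a]
  rcases le_or_gt |b| 1 with hb | hb
  · have hb1 : b ^ 2 ≤ 1 := by nlinarith [sq_abs b, abs_nonneg b]
    nlinarith [sq_nonneg b]
  · have hb4 : 4 ≤ b ^ 2 := by nlinarith [sq_abs b]
    nlinarith [sq_nonneg (a ^ 2 - b ^ 2)]

theorem norm_gaussianTerm_le {z : ℤ × ℤ} (hz : z ∉ Finset.Icc (-1) 1) :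
    ‖gaussianTerm z‖ ≤ 2 / 5 * (1 / ((z.1 : ℝ) ^ 2 + 1) * (1 / ((z.2 : ℝ) ^ 2 + 1))) := by
  obtain ⟨a, b⟩ := z
  have hab : 2 ≤ |a| ∨ 2 ≤ |b| := by
    contrapose! hz
    simp only [abs_lt] at hz
    simp only [Finset.mem_Icc, Prod.le_def, Prod.fst_neg, Prod.snd_neg, Prod.fst_one,
      Prod.snd_one]
    omega
  have key : 5 * ((a ^ 2 + 1) * (b ^ 2 + 1)) ≤ 2 * (a ^ 2 + b ^ 2) ^ 2 := by
    rcases hab with ha | hb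
    · exact five_mul_sq_add_one_mul_sq_add_one_le ha
    · linarith [five_mul_sq_add_one_mul_sq_add_one_le (b := a) hb]
  have hpos : (0 : ℝ) < ((a : ℝ) ^ 2 + (b : ℝ) ^ 2) ^ 2 := by
    have : (0 : ℤ) < (a ^ 2 + b ^ 2) ^ 2 := by
      rcases hab with h | h <;> nlinarith [sq_abs a, sq_abs b, sq_nonneg a, sq_nonneg b]
    exact_mod_cast this
  calc ‖gaussianTerm (a, b)‖ = 1 / ((a : ℝ) ^ 2 + (b : ℝ) ^ 2) ^ 2 := norm_gaussianTerm _
    _ ≤ 2 / (5 * (((a : ℝ) ^ 2 + 1) * ((b : ℝ) ^ 2 + 1))) := by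
      rw [div_le_div_iff₀ hpos (by positivity), one_mul]
      exact_mod_cast key
    _ = _ := by field_simp

theorem norm_tsum_gaussianTerm_sub_three_le :
    ‖∑' z, gaussianTerm z - 3‖ ≤ 2 / 5 * ((∑' n : ℤ, 1 / ((n : ℝ) ^ 2 + 1)) ^ 2 - 4) := by
  set w : ℤ → ℝ := fun n => 1 / ((n : ℝ) ^ 2 + 1) with hw_def
  have hw : Summable w := summable_one_div_int_sq_add_one
  have hw0 : 0 ≤ w := fun n => by positivity
  have hprod : Summable fun z : ℤ × ℤ => w z.1 * w z.2 := hw.mul_of_nonneg hw hw0 hw0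
  have htsum : ∑' z : ℤ × ℤ, 2 / 5 * (w z.1 * w z.2) = 2 / 5 * (∑' n, w n) ^ 2 := by
    rw [tsum_mul_left, ← hw.tsum_mul_tsum hw hprod, sq]
  have hbox : ∑ z ∈ Finset.Icc (-1 : ℤ × ℤ) 1, 2 / 5 * (w z.1 * w z.2) = 2 / 5 * 4 := by
    rw [← Finset.mul_sum,
      show Finset.Icc (-1 : ℤ × ℤ) 1 = Finset.Icc (-1) 1 ×ˢ Finset.Icc (-1) 1 from rfl,
      Finset.sum_product, show Finset.Icc (-1 : ℤ) 1 = {-1, 0, 1} by decide]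
    norm_num [hw_def]
  have h := norm_tsum_sub_sum_le (Finset.Icc (-1) 1) (hprod.mul_left (2 / 5))
    fun z hz => norm_gaussianTerm_le hz
  rw [sum_gaussianTerm_Icc, htsum, hbox] at h
  linarith

/-- Let `Λ = ℤ + ℤi` and `G₄ = ∑_{ω ∈ Λ \ {0}} ω⁻⁴`. Then `1 ≤ |15 G₄| ≤ 128`. -/
theorem stmt_15 (G4 : ℂ)
    (hG4 : G4 = ∑' ω : {z : ℤ × ℤ // z ≠ 0},
      1 / (((ω : ℤ × ℤ).1 : ℂ) + ((ω : ℤ × ℤ).2 : ℂ) * Complex.I) ^ 4) :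
    1 ≤ ‖15 * G4‖ ∧ ‖15 * G4‖ ≤ 128 := by
  have hG4' : G4 = ∑' z, gaussianTerm z := by
    -- the origin contributes `1 / 0 ^ 4 = 0`
    rw [hG4]
    refine tsum_subtype_eq_of_support_subset (f := gaussianTerm) fun z hz h0 => hz ?_
    simp [gaussianTerm, h0]
  set t := ∑' n : ℤ, 1 / ((n : ℝ) ^ 2 + 1)
  have ht0 : 0 ≤ t := tsum_nonneg fun n => by positivity
  have ht : t < 3.31 :=
    tsum_one_div_int_sq_add_one_le.trans_lt (by nlinarith [Real.pi_lt_d2, Real.pi_pos])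
  have htail : ‖G4 - 3‖ ≤ 2 / 5 * (t ^ 2 - 4) := hG4' ▸ norm_tsum_gaussianTerm_sub_three_le
  have hnorm : |‖G4‖ - 3| ≤ ‖G4 - 3‖ := by simpa using abs_norm_sub_norm_le G4 3
  rw [norm_mul, show ‖(15 : ℂ)‖ = 15 by simp]
  constructor <;> nlinarith [abs_le.1 hnorm]
end

section
/- Let n ≥ 2 and let T₁, T₂ be nontrivial n-torsion points of E_a(ℚ̄), where E_a: y² = x³ + ax with a a nonzero integer, such that T₁ ≠ ±T₂. Then |x(T₁) − x(T₂)| = |a|^{1/2} · |x(S₁) − x(S₂)| for some pair of nontrivial n-torsion points S₁ ≠ ±S₂ of E_1: y² = x³ + x; consequently |x(T₁) − x(T₂)| ≥ K_n |a|^{−1/2} where K_n = min over pairs S₁ ≠ ±S₂ of nontrivial n-torsion points of E_1 of min(|x(S₁)−x(S₂)|, |x(S₁)^{−1}−x(S₂)^{−1}|). -/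
open WeierstrassCurve WeierstrassCurve.Affine

/-- The curve `E₁ : y² = x³ + x` over `ℂ`. -/
noncomputable def W1 : WeierstrassCurve.Affine ℂ :=
  { a₁ := 0, a₂ := 0, a₃ := 0, a₄ := 1, a₆ := 0 }

/-- The constant `Kₙ`: the infimum over pairs `S₁ ≠ ±S₂` of nontrivial `n`-torsion points
of `E₁ : y² = x³ + x` of the quantities `|x(S₁) − x(S₂)|` and (when the `x`-coordinates are
nonzero) `|x(S₁)⁻¹ − x(S₂)⁻¹|`. -/
noncomputable def Kconst (n : ℕ) : ℝ :=
  sInf {r : ℝ | ∃ (x₁ y₁ x₂ y₂ : ℂ) (h₁ : W1.Nonsingular x₁ y₁) (h₂ : W1.Nonsingular x₂ y₂),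
    n • (Point.some _ _ h₁ : W1.Point) = 0 ∧ n • (Point.some _ _ h₂ : W1.Point) = 0 ∧
    (Point.some _ _ h₁ : W1.Point) ≠ Point.some _ _ h₂ ∧
    (Point.some _ _ h₁ : W1.Point) ≠ -Point.some _ _ h₂ ∧
    (r = ‖x₁ - x₂‖ ∨
      (x₁ ≠ 0 ∧ x₂ ≠ 0 ∧ r = ‖x₁⁻¹ - x₂⁻¹‖))}

/-! Choose `u` with `u⁴ = a`. The change of variables `(x, y) ↦ (u⁻²x, u⁻³y)` carries `E_a` onto
`E₁` and, being compatible with the chord-tangent formulas, is an injective group homomorphism on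
points; so it maps pairs of `n`-torsion points `T₁ ≠ ±T₂` to such pairs while dividing differences
of `x`-coordinates by `|u|² = |a|^{1/2}`. The bound by `Kₙ` then uses `|a| ≥ 1`. -/

def IsDistinctTorsionPair {G : Type*} [AddGroup G] (n : ℕ) (P Q : G) : Prop :=
  n • P = 0 ∧ n • Q = 0 ∧ P ≠ Q ∧ P ≠ -Q

lemma IsDistinctTorsionPair.map {G H : Type*} [AddGroup G] [AddGroup H] {n : ℕ} {P Q : G}
    (h : IsDistinctTorsionPair n P Q) (f : G →+ H) (hf : Function.Injective f) :
    IsDistinctTorsionPair n (f P) (f Q) := by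
  obtain ⟨hP, hQ, hne, hne'⟩ := h
  refine ⟨by rw [← map_nsmul, hP, map_zero], by rw [← map_nsmul, hQ, map_zero], hf.ne hne, ?_⟩
  rw [← map_neg]
  exact hf.ne hne'

namespace WeierstrassCurve

variable {F : Type*} [Field F]

def VariableChange.scaling (u : Fˣ) : VariableChange F := ⟨u, 0, 0, 0⟩

section Scaling

variable (W : WeierstrassCurve F) (u : Fˣ)

@[simp] lemma scaling_smul_a₁ : (VariableChange.scaling u • W).a₁ = ↑u⁻¹ * W.a₁ := by
  simp [variableChange_a₁, VariableChange.scaling]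

@[simp] lemma scaling_smul_a₂ : (VariableChange.scaling u • W).a₂ = ↑u⁻¹ ^ 2 * W.a₂ := by
  simp [variableChange_a₂, VariableChange.scaling]

@[simp] lemma scaling_smul_a₃ : (VariableChange.scaling u • W).a₃ = ↑u⁻¹ ^ 3 * W.a₃ := by
  simp [variableChange_a₃, VariableChange.scaling]

@[simp] lemma scaling_smul_a₄ : (VariableChange.scaling u • W).a₄ = ↑u⁻¹ ^ 4 * W.a₄ := by
  simp [variableChange_a₄, VariableChange.scaling]

@[simp] lemma scaling_smul_a₆ : (VariableChange.scaling u • W).a₆ = ↑u⁻¹ ^ 6 * W.a₆ := by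
  simp [variableChange_a₆, VariableChange.scaling]

namespace Affine

variable {W u}

lemma nonsingular_scaling {x y : F} (h : W.toAffine.Nonsingular x y) :
    (VariableChange.scaling u • W).toAffine.Nonsingular (↑u⁻¹ ^ 2 * x) (↑u⁻¹ ^ 3 * y) := by
  rw [nonsingular_iff'] at h ⊢
  obtain ⟨heq, hX | hY⟩ := h
  all_goals
    refine ⟨?_, ?_⟩
    · rw [equation_iff] at heq ⊢
      simp only [scaling_smul_a₁, scaling_smul_a₂, scaling_smul_a₃, scaling_smul_a₄,
        scaling_smul_a₆]
      linear_combination (↑u⁻¹ : F) ^ 6 * heq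
  · left
    convert mul_ne_zero (pow_ne_zero 4 u⁻¹.ne_zero) hX using 1
    simp only [scaling_smul_a₁, scaling_smul_a₂, scaling_smul_a₄]
    ring
  · right
    convert mul_ne_zero (pow_ne_zero 3 u⁻¹.ne_zero) hY using 1
    simp only [scaling_smul_a₁, scaling_smul_a₃]
    ring

variable (W u)

lemma negY_scaling (x y : F) :
    (VariableChange.scaling u • W).toAffine.negY (↑u⁻¹ ^ 2 * x) (↑u⁻¹ ^ 3 * y) =
      ↑u⁻¹ ^ 3 * W.toAffine.negY x y := by
  simp only [negY, scaling_smul_a₁, scaling_smul_a₃]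
  ring

lemma slope_scaling [DecidableEq F] (x₁ x₂ y₁ y₂ : F) :
    (VariableChange.scaling u • W).toAffine.slope (↑u⁻¹ ^ 2 * x₁) (↑u⁻¹ ^ 2 * x₂)
      (↑u⁻¹ ^ 3 * y₁) (↑u⁻¹ ^ 3 * y₂) = ↑u⁻¹ * W.toAffine.slope x₁ x₂ y₁ y₂ := by
  have hv := u⁻¹.ne_zero
  by_cases hx : x₁ = x₂
  · subst hx
    by_cases hy : y₁ = W.toAffine.negY x₁ y₂
    · rw [slope_of_Y_eq rfl hy, slope_of_Y_eq rfl (by rw [negY_scaling, hy]), mul_zero]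
    · have hy' : ↑u⁻¹ ^ 3 * y₁ ≠ (VariableChange.scaling u • W).toAffine.negY
          (↑u⁻¹ ^ 2 * x₁) (↑u⁻¹ ^ 3 * y₂) := by
        rwa [negY_scaling, Ne, mul_right_inj' (pow_ne_zero 3 hv)]
      rw [slope_of_Y_ne rfl hy, slope_of_Y_ne rfl hy', negY_scaling, ← mul_sub]
      simp only [scaling_smul_a₁, scaling_smul_a₂, scaling_smul_a₄]
      field_simp
  · have hx' : ↑u⁻¹ ^ 2 * x₁ ≠ ↑u⁻¹ ^ 2 * x₂ := by
      rwa [Ne, mul_right_inj' (pow_ne_zero 2 hv)]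
    rw [slope_of_X_ne hx, slope_of_X_ne hx', ← mul_sub, ← mul_sub]
    field_simp [sub_ne_zero.2 hx]

lemma addX_scaling (x₁ x₂ ℓ : F) :
    (VariableChange.scaling u • W).toAffine.addX (↑u⁻¹ ^ 2 * x₁) (↑u⁻¹ ^ 2 * x₂) (↑u⁻¹ * ℓ) =
      ↑u⁻¹ ^ 2 * W.toAffine.addX x₁ x₂ ℓ := by
  simp only [addX, scaling_smul_a₁, scaling_smul_a₂]
  ring

lemma addY_scaling (x₁ x₂ y₁ ℓ : F) :
    (VariableChange.scaling u • W).toAffine.addY (↑u⁻¹ ^ 2 * x₁) (↑u⁻¹ ^ 2 * x₂)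
      (↑u⁻¹ ^ 3 * y₁) (↑u⁻¹ * ℓ) = ↑u⁻¹ ^ 3 * W.toAffine.addY x₁ x₂ y₁ ℓ := by
  rw [addY, negAddY, addX_scaling, show ↑u⁻¹ * ℓ * (↑u⁻¹ ^ 2 * W.toAffine.addX x₁ x₂ ℓ -
      ↑u⁻¹ ^ 2 * x₁) + ↑u⁻¹ ^ 3 * y₁ = ↑u⁻¹ ^ 3 * W.toAffine.negAddY x₁ x₂ y₁ ℓ by
    simp only [negAddY]; ring, negY_scaling, addY]

namespace Point

def scaling : W.toAffine.Point → (VariableChange.scaling u • W).toAffine.Point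
  | .zero => .zero
  | .some _ _ h => .some _ _ (nonsingular_scaling h)

lemma scaling_some {x y : F} (h : W.toAffine.Nonsingular x y) :
    scaling W u (.some _ _ h) = .some _ _ (nonsingular_scaling h) :=
  rfl

variable [DecidableEq F]

lemma scaling_add (P Q : W.toAffine.Point) :
    scaling W u (P + Q) = scaling W u P + scaling W u Q := by
  have hv := u⁻¹.ne_zero
  rcases P with _ | @⟨x₁, y₁, h₁⟩
  · simp only [← zero_def, zero_add]; rfl
  rcases Q with _ | @⟨x₂, y₂, h₂⟩
  · simp only [← zero_def, add_zero]; rfl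
  by_cases hxy : x₁ = x₂ ∧ y₁ = W.toAffine.negY x₂ y₂
  · rw [add_of_Y_eq hxy.1 hxy.2]
    exact (add_of_Y_eq (by rw [hxy.1]) (by rw [negY_scaling, hxy.2])).symm
  · have hxy' : ¬(↑u⁻¹ ^ 2 * x₁ = ↑u⁻¹ ^ 2 * x₂ ∧ ↑u⁻¹ ^ 3 * y₁ =
        (VariableChange.scaling u • W).toAffine.negY (↑u⁻¹ ^ 2 * x₂) (↑u⁻¹ ^ 3 * y₂)) := by
      rwa [negY_scaling, mul_right_inj' (pow_ne_zero 2 hv), mul_right_inj' (pow_ne_zero 3 hv)]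
    rw [add_some hxy, scaling_some, scaling_some, scaling_some, add_some hxy', some.injEq,
      slope_scaling, addX_scaling, addY_scaling]
    exact ⟨rfl, rfl⟩

def scalingHom : W.toAffine.Point →+ (VariableChange.scaling u • W).toAffine.Point where
  toFun := scaling W u
  map_zero' := rfl
  map_add' := scaling_add W u

lemma scalingHom_injective : Function.Injective (scalingHom W u) := by
  refine (injective_iff_map_eq_zero _).2 fun P hP => ?_
  rcases P with _ | ⟨h⟩
  · rfl
  · exact absurd hP (some_ne_zero _)

end Point

end Affine

end Scaling

lemma Affine.exists_isDistinctTorsionPair_of_eq_scaling [DecidableEq F]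
    {W W' : WeierstrassCurve F} {u : Fˣ}
    (hW : W' = VariableChange.scaling u • W) {n : ℕ} {x₁ y₁ x₂ y₂ : F}
    {h₁ : W.toAffine.Nonsingular x₁ y₁} {h₂ : W.toAffine.Nonsingular x₂ y₂}
    (hT : IsDistinctTorsionPair n (Point.some _ _ h₁) (Point.some _ _ h₂)) :
    ∃ (h₁' : W'.toAffine.Nonsingular (↑u⁻¹ ^ 2 * x₁) (↑u⁻¹ ^ 3 * y₁))
      (h₂' : W'.toAffine.Nonsingular (↑u⁻¹ ^ 2 * x₂) (↑u⁻¹ ^ 3 * y₂)),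
      IsDistinctTorsionPair n (Point.some _ _ h₁') (Point.some _ _ h₂') := by
  subst hW
  exact ⟨_, _, hT.map (Point.scalingHom W u) (Point.scalingHom_injective W u)⟩

end WeierstrassCurve

lemma Kconst_nonneg (n : ℕ) : 0 ≤ Kconst n :=
  Real.sInf_nonneg <| by
    rintro r ⟨-, -, -, -, -, -, -, -, -, -, rfl | ⟨-, -, rfl⟩⟩ <;> exact norm_nonneg _

lemma Kconst_le_norm_sub {n : ℕ} {x₁ y₁ x₂ y₂ : ℂ} {h₁ : W1.Nonsingular x₁ y₁}
    {h₂ : W1.Nonsingular x₂ y₂}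
    (hS : IsDistinctTorsionPair n (Point.some _ _ h₁) (Point.some _ _ h₂)) :
    Kconst n ≤ ‖x₁ - x₂‖ := by
  refine csInf_le ⟨0, ?_⟩ ⟨x₁, y₁, x₂, y₂, h₁, h₂, hS.1, hS.2.1, hS.2.2.1, hS.2.2.2, Or.inl rfl⟩
  rintro r ⟨-, -, -, -, -, -, -, -, -, -, rfl | ⟨-, -, rfl⟩⟩ <;> exact norm_nonneg _

lemma W1_eq_scaling {a u : ℂ} (hu : u ≠ 0) (hua : u ^ 4 = a) :
    W1 = VariableChange.scaling (Units.mk0 u hu) • ⟨0, 0, 0, a, 0⟩ := by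
  ext <;> simp [W1, ← hua, hu]

lemma norm_sq_eq_sqrt_norm_of_pow_four_eq {𝕜 : Type*} [NormedDivisionRing 𝕜] {u z : 𝕜}
    (h : u ^ 4 = z) : ‖u‖ ^ 2 = √‖z‖ := by
  rw [← h, norm_pow, show ‖u‖ ^ 4 = (‖u‖ ^ 2) ^ 2 by ring, Real.sqrt_sq (by positivity)]

theorem stmt_16_general (a : ℤ) (ha : a ≠ 0)
    (Wa : WeierstrassCurve.Affine ℂ)
    (hWa : Wa = { a₁ := 0, a₂ := 0, a₃ := 0, a₄ := (a : ℂ), a₆ := 0 })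
    (n : ℕ)
    (x₁ y₁ x₂ y₂ : ℂ) (h₁ : Wa.Nonsingular x₁ y₁) (h₂ : Wa.Nonsingular x₂ y₂)
    (hT₁ : n • (Point.some _ _ h₁ : Wa.Point) = 0)
    (hT₂ : n • (Point.some _ _ h₂ : Wa.Point) = 0)
    (hne : (Point.some _ _ h₁ : Wa.Point) ≠ Point.some _ _ h₂)
    (hne' : (Point.some _ _ h₁ : Wa.Point) ≠ -Point.some _ _ h₂) :
    (∃ (x₁' y₁' x₂' y₂' : ℂ) (h₁' : W1.Nonsingular x₁' y₁') (h₂' : W1.Nonsingular x₂' y₂'),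
      n • (Point.some _ _ h₁' : W1.Point) = 0 ∧ n • (Point.some _ _ h₂' : W1.Point) = 0 ∧
      (Point.some _ _ h₁' : W1.Point) ≠ Point.some _ _ h₂' ∧
      (Point.some _ _ h₁' : W1.Point) ≠ -Point.some _ _ h₂' ∧
      ‖x₁ - x₂‖ = Real.sqrt |(a : ℝ)| * ‖x₁' - x₂'‖) ∧
    Kconst n * (Real.sqrt |(a : ℝ)|)⁻¹ ≤ ‖x₁ - x₂‖ := by
  subst hWa
  obtain ⟨u, hua⟩ := IsAlgClosed.exists_pow_nat_eq (a : ℂ) four_pos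
  have hu : u ≠ 0 := by
    rintro rfl
    exact ha (by exact_mod_cast hua.symm.trans (zero_pow four_ne_zero))
  obtain ⟨h₁', h₂', hS⟩ := exists_isDistinctTorsionPair_of_eq_scaling (W1_eq_scaling hu hua)
    (h₁ := h₁) (h₂ := h₂) ⟨hT₁, hT₂, hne, hne'⟩
  have hsqrt : ‖u‖ ^ 2 = √|(a : ℝ)| := by
    rw [norm_sq_eq_sqrt_norm_of_pow_four_eq hua, Complex.norm_intCast]
  have hdist : ‖x₁ - x₂‖ =
      √|(a : ℝ)| * ‖↑(Units.mk0 u hu)⁻¹ ^ 2 * x₁ - ↑(Units.mk0 u hu)⁻¹ ^ 2 * x₂‖ := by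
    rw [← mul_sub, norm_mul, norm_pow, ← hsqrt]
    simp [hu]
  have hone : 1 ≤ √|(a : ℝ)| := Real.one_le_sqrt.2 (by exact_mod_cast Int.one_le_abs ha)
  refine ⟨⟨_, _, _, _, h₁', h₂', hS.1, hS.2.1, hS.2.2.1, hS.2.2.2, hdist⟩, ?_⟩
  calc Kconst n * (√|(a : ℝ)|)⁻¹ ≤ Kconst n * √|(a : ℝ)| :=
        mul_le_mul_of_nonneg_left ((inv_le_one_of_one_le₀ hone).trans hone) (Kconst_nonneg n)
    _ ≤ _ * √|(a : ℝ)| := mul_le_mul_of_nonneg_right (Kconst_le_norm_sub hS) (by positivity)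
    _ = ‖x₁ - x₂‖ := by rw [hdist, mul_comm]

/-- Let `n ≥ 2` and let `T₁ ≠ ±T₂` be nontrivial `n`-torsion points of
`E_a : y² = x³ + a x` over `ℂ` (`a` a nonzero integer). Then
`|x(T₁) − x(T₂)| = |a|^{1/2} |x(S₁) − x(S₂)|` for some pair of nontrivial `n`-torsion
points `S₁ ≠ ±S₂` of `E₁ : y² = x³ + x`; consequently
`|x(T₁) − x(T₂)| ≥ Kₙ |a|^{−1/2}`. -/
theorem stmt_16 (a : ℤ) (ha : a ≠ 0)
    (Wa : WeierstrassCurve.Affine ℂ)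
    (hWa : Wa = { a₁ := 0, a₂ := 0, a₃ := 0, a₄ := (a : ℂ), a₆ := 0 })
    (n : ℕ) (hn : 2 ≤ n)
    (x₁ y₁ x₂ y₂ : ℂ) (h₁ : Wa.Nonsingular x₁ y₁) (h₂ : Wa.Nonsingular x₂ y₂)
    (hT₁ : n • (Point.some _ _ h₁ : Wa.Point) = 0)
    (hT₂ : n • (Point.some _ _ h₂ : Wa.Point) = 0)
    (hne : (Point.some _ _ h₁ : Wa.Point) ≠ Point.some _ _ h₂)
    (hne' : (Point.some _ _ h₁ : Wa.Point) ≠ -Point.some _ _ h₂) :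
    (∃ (x₁' y₁' x₂' y₂' : ℂ) (h₁' : W1.Nonsingular x₁' y₁') (h₂' : W1.Nonsingular x₂' y₂'),
      n • (Point.some _ _ h₁' : W1.Point) = 0 ∧ n • (Point.some _ _ h₂' : W1.Point) = 0 ∧
      (Point.some _ _ h₁' : W1.Point) ≠ Point.some _ _ h₂' ∧
      (Point.some _ _ h₁' : W1.Point) ≠ -Point.some _ _ h₂' ∧
      ‖x₁ - x₂‖ = Real.sqrt |(a : ℝ)| * ‖x₁' - x₂'‖) ∧
    Kconst n * (Real.sqrt |(a : ℝ)|)⁻¹ ≤ ‖x₁ - x₂‖ :=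
  stmt_16_general a ha Wa hWa n x₁ y₁ x₂ y₂ h₁ h₂ hT₁ hT₂ hne hne'
end

section
/- Let p ≥ 13 be a prime and n a positive integer whose smallest prime divisor is p. Then (2p−2)/p² − ∑_{q | n prime} 1/q² ≥ 0.8/p. -/
/-! Every prime factor of `n` other than `p` is odd and exceeds `p`, hence is at least `p + 2`.
Comparing with `∑_{m > p + 1} 1/m² ≤ 1/(p + 1)` gives `∑_{q ∣ n} 1/q² ≤ 1/p² + 1/(p + 1)`, and
`(2p - 3)/p² - 1/(p + 1) ≥ 0.8/p` is a quadratic inequality in `p` valid once `p ≥ 13`. -/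

open Finset

theorem sum_one_div_sq_le_one_div {s : Finset ℕ} {k : ℕ} (hk : k ≠ 0) (hs : ∀ m ∈ s, k < m) :
    ∑ m ∈ s, 1 / (m : ℝ) ^ 2 ≤ 1 / (k : ℝ) := by
  set N := s.sup id ⊔ k
  have hsub : s ⊆ Ioc k N := fun m hm =>
    mem_Ioc.mpr ⟨hs m hm, le_sup_of_le_left (le_sup (f := id) hm)⟩
  calc ∑ m ∈ s, 1 / (m : ℝ) ^ 2
      ≤ ∑ m ∈ Ioc k N, ((m : ℝ) ^ 2)⁻¹ := by
        simpa only [one_div] using sum_le_sum_of_subset_of_nonneg hsub (by intros; positivity)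
    _ ≤ (k : ℝ)⁻¹ - (N : ℝ)⁻¹ := sum_Ioc_inv_sq_le_sub hk le_sup_right
    _ ≤ 1 / (k : ℝ) := by
        rw [one_div]
        linarith [inv_nonneg.mpr (N.cast_nonneg : (0 : ℝ) ≤ N)]

theorem sum_one_div_sq_le_of_forall_eq_or_add_two_le {s : Finset ℕ} {p : ℕ}
    (hs : ∀ q ∈ s, q = p ∨ p + 2 ≤ q) :
    ∑ q ∈ s, 1 / (q : ℝ) ^ 2 ≤ 1 / (p : ℝ) ^ 2 + 1 / ((p : ℝ) + 1) := by
  have hrest : ∀ q ∈ s.erase p, p + 1 < q := fun q hq => by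
    obtain ⟨hqp, hqs⟩ := mem_erase.mp hq
    have := hs q hqs
    omega
  calc ∑ q ∈ s, 1 / (q : ℝ) ^ 2
      ≤ ∑ q ∈ insert p s, 1 / (q : ℝ) ^ 2 :=
        sum_le_sum_of_subset_of_nonneg (subset_insert p s) (by intros; positivity)
    _ = 1 / (p : ℝ) ^ 2 + ∑ q ∈ s.erase p, 1 / (q : ℝ) ^ 2 := by
        rw [← add_sum_erase _ _ (mem_insert_self p s), erase_insert_eq_erase]
    _ ≤ 1 / (p : ℝ) ^ 2 + 1 / ((p : ℝ) + 1) := by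
        gcongr
        exact_mod_cast sum_one_div_sq_le_one_div p.succ_ne_zero hrest

theorem Nat.Prime.eq_or_add_two_le {p q : ℕ} (hp : p.Prime) (hq : q.Prime) (hp2 : p ≠ 2)
    (hpq : p ≤ q) : q = p ∨ p + 2 ≤ q := by
  have hq2 : q ≠ 2 := by have := hp.two_le; omega
  obtain ⟨a, rfl⟩ := hp.odd_of_ne_two hp2
  obtain ⟨b, rfl⟩ := hq.odd_of_ne_two hq2
  omega

theorem le_two_mul_sub_two_div_sq_sub {x : ℝ} (hx : 13 ≤ x) :
    0.8 / x ≤ (2 * x - 2) / x ^ 2 - (1 / x ^ 2 + 1 / (x + 1)) := by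
  have hx0 : 0 < x := by linarith
  rw [div_add_div _ _ (by positivity) (by positivity), div_sub_div _ _ (by positivity) (by positivity),
    div_le_div_iff₀ (by positivity) (by positivity)]
  -- clearing denominators leaves a positive multiple of `0.2 x² - 1.8 x - 3`
  have hquad : (0 : ℝ) ≤ 0.2 * x ^ 2 - 1.8 * x - 3 := by nlinarith
  nlinarith [mul_nonneg (mul_nonneg (mul_nonneg hquad hx0.le) hx0.le) hx0.le]

theorem stmt_17_general (p n : ℕ) (hp : p.Prime) (hp13 : 13 ≤ p)
    (hmin : ∀ q : ℕ, q.Prime → q ∣ n → p ≤ q) :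
    (0.8 : ℝ) / p ≤ (2 * (p : ℝ) - 2) / (p : ℝ) ^ 2 -
      ∑ q ∈ n.primeFactors, (1 : ℝ) / (q : ℝ) ^ 2 := by
  have hfactors : ∀ q ∈ n.primeFactors, q = p ∨ p + 2 ≤ q := fun q hq => by
    obtain ⟨hq, hqn, -⟩ := Nat.mem_primeFactors.mp hq
    exact hp.eq_or_add_two_le hq (by omega) (hmin q hq hqn)
  have hsum := sum_one_div_sq_le_of_forall_eq_or_add_two_le hfactors
  have harith := le_two_mul_sub_two_div_sq_sub (x := p) (by exact_mod_cast hp13)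
  linarith

/-- Let `p ≥ 13` be a prime and `n` a positive integer whose smallest prime divisor is `p`.
Then `(2p−2)/p² − ∑_{q ∣ n prime} 1/q² ≥ 0.8/p`. -/
theorem stmt_17 (p n : ℕ) (hp : p.Prime) (hp13 : 13 ≤ p) (hn : 0 < n)
    (hpn : p ∣ n) (hmin : ∀ q : ℕ, q.Prime → q ∣ n → p ≤ q) :
    (0.8 : ℝ) / p ≤ (2 * (p : ℝ) - 2) / (p : ℝ) ^ 2 -
      ∑ q ∈ n.primeFactors, (1 : ℝ) / (q : ℝ) ^ 2 :=
  stmt_17_general p n hp hp13 hmin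
end

section
/- Let f, g ∈ ℤ[x] be coprime polynomials with ψ² = f·g, and suppose every two distinct roots x₀ ≠ x₁ of ψ² satisfy |x₀ − x₁| ≥ ε and (when nonzero) |x₀^{−1} − x₁^{−1}| ≥ ε, for some ε with 0 < ε ≤ 2. Let u, v be coprime integers with v ≥ 1, max(|u|, v) ≥ (ε/2)^{−1}, and ψ²(u,v) ≠ 0, where F(u,v) denotes the homogenization of a polynomial F evaluated at (u,v). Then |ψ²(u,v)| ≥ max(|u|, v)^d · (ε/2)^d, where d = min(deg f, deg g). -/
/-!
Over `ℂ`, a factor `F` of `ψ²` satisfies `F(u,v) = lc(F) · ∏ (u - z v)`, the product over its roots.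
If `|u| ≤ v`, each factor is `v · |u/v - z|`; if `|u| > v`, it is `|u| · |z| · |v/u - 1/z|`
(or `|u|` when `z = 0`), and `|lc(F)| · ∏_{z ≠ 0} |z|` is the absolute value of the lowest
nonzero coefficient of `F`, so at least `1`. Thus `|F(u,v)| ≥ (max(|u|,v) · ε/2)^{deg F}` as soon as
`u/v` (resp. `v/u`) is at distance `≥ ε/2` from every root (resp. inverse of a nonzero root) of `F`.
By the separation hypothesis and the triangle inequality this holds for `F = f` or for `F = g`,
and the other factor is a nonzero integer.
-/

open Polynomial

/-- The homogenization of a polynomial `F ∈ ℤ[x]` (with respect to its degree),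
evaluated at `(u, v)`: this is `v ^ deg F * F(u/v)`. -/
def homEval (F : Polynomial ℤ) (u v : ℤ) : ℤ :=
  ∑ i ∈ Finset.range (F.natDegree + 1), F.coeff i * u ^ i * v ^ (F.natDegree - i)

section NormedField

variable {K : Type*} [NormedField K]

theorem Multiset.norm_prod (s : Multiset K) : ‖s.prod‖ = (s.map norm).prod :=
  map_multiset_prod (normHom : K →*₀ ℝ) s

theorem Polynomial.Splits.norm_leadingCoeff_mul_pow_le_norm_eval {p : K[X]} (hp : p.Splits)
    {x : K} {c : ℝ} (hc : 0 ≤ c) (hfar : ∀ z ∈ p.roots, c ≤ ‖x - z‖) :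
    ‖p.leadingCoeff‖ * c ^ p.natDegree ≤ ‖p.eval x‖ := by
  rw [hp.eval_eq_prod_roots, norm_mul, Multiset.norm_prod, Multiset.map_map,
    hp.natDegree_eq_card_roots, ← Multiset.prod_replicate, ← Multiset.map_const']
  gcongr
  exact Multiset.prod_map_le_prod_map₀ _ _ (fun _ _ => hc) hfar

theorem Polynomial.trailingCoeff_multiset_prod {R : Type*} [CommSemiring R] [NoZeroDivisors R]
    (s : Multiset R[X]) : s.prod.trailingCoeff = (s.map trailingCoeff).prod := by
  induction s using Multiset.induction with
  | empty => simp [trailingCoeff]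
  | cons p s ih => simp [trailingCoeff_mul, ih]

open Classical in
theorem Polynomial.trailingCoeff_X_sub_C (z : K) :
    (X - C z).trailingCoeff = if z = 0 then 1 else -z := by
  split_ifs with hz
  · simp [hz, trailingCoeff, natTrailingDegree_X]
  · rw [trailingCoeff, natTrailingDegree_eq_zero.mpr (Or.inr (by simp [hz]))]
    simp

open Classical in
theorem Polynomial.Splits.norm_trailingCoeff {p : K[X]} (hp : p.Splits) :
    ‖p.trailingCoeff‖ =
      ‖p.leadingCoeff‖ * (p.roots.map fun z => if z = 0 then 1 else ‖z‖).prod := by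
  conv_lhs => rw [hp.eq_prod_roots]
  rw [trailingCoeff_mul, trailingCoeff_multiset_prod, norm_mul, Multiset.norm_prod,
    Multiset.map_map, Multiset.map_map]
  congr 2
  · simp [trailingCoeff]
  · refine Multiset.map_congr rfl fun z _ => ?_
    simp only [Function.comp_apply, trailingCoeff_X_sub_C]
    split_ifs <;> simp

open Classical in
theorem Polynomial.Splits.norm_trailingCoeff_mul_pow_le_norm_eval {p : K[X]} (hp : p.Splits)
    {x : K} {c : ℝ} (hc0 : 0 ≤ c) (hc1 : c ≤ 1)
    (hfar : ∀ z ∈ p.roots, z ≠ 0 → c ≤ ‖x⁻¹ - z⁻¹‖) :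
    ‖p.trailingCoeff‖ * (‖x‖ * c) ^ p.natDegree ≤ ‖p.eval x‖ := by
  set w : K → ℝ := fun z => if z = 0 then 1 else ‖z‖
  have hroot : ∀ z ∈ p.roots, w z * (‖x‖ * c) ≤ ‖x - z‖ := by
    intro z hz
    rcases eq_or_ne x 0 with rfl | hx
    · simp
    rcases eq_or_ne z 0 with rfl | hz0
    · simpa [w] using mul_le_of_le_one_right (norm_nonneg x) hc1
    · have : x - z = x * z * (z⁻¹ - x⁻¹) := by field_simp
      rw [this, norm_mul, norm_mul, norm_sub_rev]
      calc w z * (‖x‖ * c) = ‖x‖ * ‖z‖ * c := by simp only [w, if_neg hz0]; ring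
        _ ≤ ‖x‖ * ‖z‖ * ‖x⁻¹ - z⁻¹‖ := by gcongr; exact hfar z hz hz0
  rw [hp.norm_trailingCoeff, hp.eval_eq_prod_roots, norm_mul, Multiset.norm_prod,
    Multiset.map_map, mul_assoc, hp.natDegree_eq_card_roots, ← Multiset.prod_replicate,
    ← Multiset.map_const', ← Multiset.prod_map_mul]
  gcongr
  refine Multiset.prod_map_le_prod_map₀ _ _ (fun z _ => ?_) hroot
  have : 0 ≤ w z := by simp only [w]; split_ifs <;> positivity
  positivity

end NormedField

section homEval

theorem one_le_norm_intCast {n : ℤ} (hn : n ≠ 0) : 1 ≤ ‖(n : ℂ)‖ := by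
  rw [Complex.norm_intCast]
  exact_mod_cast Int.one_le_abs hn

variable (F : ℤ[X])

theorem natDegree_map_int_complex : (F.map (algebraMap ℤ ℂ)).natDegree = F.natDegree :=
  natDegree_map_eq_of_injective (RingHom.injective_int _) F

theorem intCast_homEval {u v : ℤ} (hv : v ≠ 0) :
    (homEval F u v : ℂ) = v ^ F.natDegree * (F.map (algebraMap ℤ ℂ)).eval ((u : ℂ) / v) := by
  have hv' : (v : ℂ) ≠ 0 := by exact_mod_cast hv
  rw [eval_eq_sum_range, natDegree_map_int_complex, homEval, Finset.mul_sum]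
  push_cast
  refine Finset.sum_congr rfl fun i hi => ?_
  rw [coeff_map, algebraMap_int_eq, eq_intCast, div_pow,
    ← pow_sub_mul_pow (v : ℂ) (Nat.lt_succ_iff.mp (Finset.mem_range.mp hi))]
  field_simp

theorem homEval_mul {G : ℤ[X]} (hF : F ≠ 0) (hG : G ≠ 0) {u v : ℤ} (hv : v ≠ 0) :
    homEval (F * G) u v = homEval F u v * homEval G u v := by
  apply Int.cast_injective (α := ℂ)
  simp only [Int.cast_mul, intCast_homEval _ hv, natDegree_mul hF hG, Polynomial.map_mul,
    eval_mul]
  ring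

theorem one_le_norm_leadingCoeff_map (hF : F ≠ 0) :
    1 ≤ ‖(F.map (algebraMap ℤ ℂ)).leadingCoeff‖ := by
  rw [leadingCoeff_map_of_injective (RingHom.injective_int _)]
  exact one_le_norm_intCast (leadingCoeff_ne_zero.mpr hF)

theorem one_le_norm_trailingCoeff_map (hF : F ≠ 0) :
    1 ≤ ‖(F.map (algebraMap ℤ ℂ)).trailingCoeff‖ := by
  have hFc : F.map (algebraMap ℤ ℂ) ≠ 0 :=
    (Polynomial.map_ne_zero_iff (RingHom.injective_int _)).mpr hF
  have htc : (F.map (algebraMap ℤ ℂ)).trailingCoeff =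
      (F.coeff (F.map (algebraMap ℤ ℂ)).natTrailingDegree : ℂ) := by
    rw [trailingCoeff, coeff_map, eq_intCast]
  refine htc ▸ one_le_norm_intCast fun h0 => ?_
  exact trailingCoeff_nonzero_iff_nonzero.mpr hFc (by rw [htc, h0, Int.cast_zero])

theorem abs_homEval {u v : ℤ} (hv : v ≠ 0) :
    |(homEval F u v : ℝ)| =
      |(v : ℝ)| ^ F.natDegree * ‖(F.map (algebraMap ℤ ℂ)).eval ((u : ℂ) / v)‖ := by
  rw [← Complex.norm_intCast (homEval F u v), intCast_homEval F hv, norm_mul, norm_pow,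
    Complex.norm_intCast]

theorem pow_le_abs_homEval_of_le_norm_sub (hF : F ≠ 0) {u v : ℤ} (hv : v ≠ 0) {c : ℝ}
    (hc : 0 ≤ c) (hfar : ∀ z ∈ F.aroots ℂ, c ≤ ‖(u / v : ℂ) - z‖) :
    (|(v : ℝ)| * c) ^ F.natDegree ≤ |(homEval F u v : ℝ)| := by
  have key := (IsAlgClosed.splits (F.map (algebraMap ℤ ℂ))).norm_leadingCoeff_mul_pow_le_norm_eval
    hc hfar
  rw [natDegree_map_int_complex] at key
  rw [abs_homEval F hv, mul_pow]
  gcongr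
  exact le_mul_of_one_le_left (by positivity) (one_le_norm_leadingCoeff_map F hF) |>.trans key

theorem pow_le_abs_homEval_of_le_norm_inv_sub (hF : F ≠ 0) {u v : ℤ} (hv : v ≠ 0) {c : ℝ}
    (hc0 : 0 ≤ c) (hc1 : c ≤ 1) (hfar : ∀ z ∈ F.aroots ℂ, z ≠ 0 → c ≤ ‖(v / u : ℂ) - z⁻¹‖) :
    (|(u : ℝ)| * c) ^ F.natDegree ≤ |(homEval F u v : ℝ)| := by
  have key := (IsAlgClosed.splits (F.map (algebraMap ℤ ℂ))).norm_trailingCoeff_mul_pow_le_norm_eval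
    (x := (u : ℂ) / v) hc0 hc1 (by simpa only [inv_div] using hfar)
  rw [natDegree_map_int_complex] at key
  have hv' : (0 : ℝ) < |(v : ℝ)| := by positivity
  have hu : |(u : ℝ)| = |(v : ℝ)| * ‖(u : ℂ) / v‖ := by
    rw [norm_div, Complex.norm_intCast, Complex.norm_intCast]
    field_simp
  rw [abs_homEval F hv, hu, mul_assoc, mul_pow]
  gcongr
  exact le_mul_of_one_le_left (by positivity) (one_le_norm_trailingCoeff_map F hF) |>.trans key

end homEval

theorem forall_le_norm_sub_or_forall_le_norm_sub {E β : Type*} [SeminormedAddCommGroup E]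
    (φ : β → E) {P Q : β → Prop} {c : ℝ} (hsep : ∀ s, P s → ∀ t, Q t → 2 * c ≤ ‖φ s - φ t‖)
    (x : E) : (∀ s, P s → c ≤ ‖x - φ s‖) ∨ (∀ t, Q t → c ≤ ‖x - φ t‖) := by
  by_contra! ⟨⟨s, hs, hxs⟩, ⟨t, ht, hxt⟩⟩
  have := norm_sub_le_norm_sub_add_norm_sub (φ s) x (φ t)
  linarith [hsep s hs t ht, norm_sub_rev (φ s) x]

section Factors

variable {f g : ℤ[X]} (hf : f ≠ 0) (hg : g ≠ 0) {u v : ℤ} (hv : v ≠ 0) {c : ℝ}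
include hf hg hv

theorem pow_le_abs_homEval_or_of_le_norm_sub (hc : 0 ≤ c)
    (hsep : ∀ z ∈ f.aroots ℂ, ∀ w ∈ g.aroots ℂ, 2 * c ≤ ‖z - w‖) :
    (|(v : ℝ)| * c) ^ f.natDegree ≤ |(homEval f u v : ℝ)| ∨
      (|(v : ℝ)| * c) ^ g.natDegree ≤ |(homEval g u v : ℝ)| :=
  (forall_le_norm_sub_or_forall_le_norm_sub id hsep ((u : ℂ) / v)).imp
    (pow_le_abs_homEval_of_le_norm_sub f hf hv hc)
    (pow_le_abs_homEval_of_le_norm_sub g hg hv hc)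

theorem pow_le_abs_homEval_or_of_le_norm_inv_sub (hc0 : 0 ≤ c) (hc1 : c ≤ 1)
    (hsep : ∀ z ∈ f.aroots ℂ, ∀ w ∈ g.aroots ℂ, z ≠ 0 → w ≠ 0 → 2 * c ≤ ‖z⁻¹ - w⁻¹‖) :
    (|(u : ℝ)| * c) ^ f.natDegree ≤ |(homEval f u v : ℝ)| ∨
      (|(u : ℝ)| * c) ^ g.natDegree ≤ |(homEval g u v : ℝ)| :=
  (forall_le_norm_sub_or_forall_le_norm_sub (·⁻¹) (P := fun z => z ∈ f.aroots ℂ ∧ z ≠ 0)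
      (Q := fun z => z ∈ g.aroots ℂ ∧ z ≠ 0)
      (fun z hz w hw => hsep z hz.1 w hw.1 hz.2 hw.2) ((v : ℂ) / u)).imp
    (fun h => pow_le_abs_homEval_of_le_norm_inv_sub f hf hv hc0 hc1 fun z hz hz0 => h z ⟨hz, hz0⟩)
    (fun h => pow_le_abs_homEval_of_le_norm_inv_sub g hg hv hc0 hc1 fun z hz hz0 => h z ⟨hz, hz0⟩)

theorem pow_min_le_abs_homEval_mul (hne : homEval (f * g) u v ≠ 0) {B : ℝ} (hB : 1 ≤ B)
    (h : B ^ f.natDegree ≤ |(homEval f u v : ℝ)| ∨ B ^ g.natDegree ≤ |(homEval g u v : ℝ)|) :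
    B ^ min f.natDegree g.natDegree ≤ |(homEval (f * g) u v : ℝ)| := by
  rw [homEval_mul f hf hg hv] at hne ⊢
  have one_le_abs {n : ℤ} (hn : n ≠ 0) : (1 : ℝ) ≤ |(n : ℝ)| := by
    exact_mod_cast Int.one_le_abs hn
  rw [Int.cast_mul, abs_mul]
  rcases h with h | h
  · calc B ^ min f.natDegree g.natDegree ≤ B ^ f.natDegree :=
          pow_le_pow_right₀ hB (min_le_left _ _)
      _ ≤ _ := h.trans (le_mul_of_one_le_right (abs_nonneg _)
          (one_le_abs (right_ne_zero_of_mul hne)))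
  · calc B ^ min f.natDegree g.natDegree ≤ B ^ g.natDegree :=
          pow_le_pow_right₀ hB (min_le_right _ _)
      _ ≤ _ := h.trans (le_mul_of_one_le_left (abs_nonneg _)
          (one_le_abs (left_ne_zero_of_mul hne)))

end Factors

theorem ne_of_mem_aroots_of_isCoprime {f g : ℤ[X]}
    (hcop : IsCoprime (f.map (Int.castRingHom ℚ)) (g.map (Int.castRingHom ℚ))) {z w : ℂ}
    (hz : z ∈ f.aroots ℂ) (hw : w ∈ g.aroots ℂ) : z ≠ w := by
  rintro rfl
  have := aeval_ne_zero_of_isCoprime hcop z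
  rw [← algebraMap_int_eq, aeval_map_algebraMap, aeval_map_algebraMap] at this
  exact this.elim (· (mem_aroots.mp hz).2) (· (mem_aroots.mp hw).2)

theorem stmt_18_general (f g : Polynomial ℤ) (hf : f ≠ 0) (hg : g ≠ 0)
    (hcop : IsCoprime (f.map (Int.castRingHom ℚ)) (g.map (Int.castRingHom ℚ)))
    (ε : ℝ) (hε0 : 0 < ε) (hε2 : ε ≤ 2)
    (hsep : ∀ x₀ x₁ : ℂ, aeval x₀ (f * g) = 0 → aeval x₁ (f * g) = 0 → x₀ ≠ x₁ →
      ε ≤ ‖x₀ - x₁‖ ∧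
        (x₀ ≠ 0 → x₁ ≠ 0 → ε ≤ ‖x₀⁻¹ - x₁⁻¹‖))
    (u v : ℤ) (hv : 1 ≤ v)
    (hbig : (ε / 2)⁻¹ ≤ ((max |u| v : ℤ) : ℝ))
    (hne : homEval (f * g) u v ≠ 0)
    (d : ℕ) (hd : d = min f.natDegree g.natDegree) :
    ((max |u| v : ℤ) : ℝ) ^ d * (ε / 2) ^ d ≤ |((homEval (f * g) u v : ℤ) : ℝ)| := by
  have hc0 : 0 < ε / 2 := by positivity
  have hv0 : v ≠ 0 := by omega
  have hroots : ∀ z ∈ f.aroots ℂ, ∀ w ∈ g.aroots ℂ,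
      2 * (ε / 2) ≤ ‖z - w‖ ∧ (z ≠ 0 → w ≠ 0 → 2 * (ε / 2) ≤ ‖z⁻¹ - w⁻¹‖) := by
    intro z hz w hw
    rw [mul_div_cancel₀ ε two_ne_zero]
    refine hsep z w ?_ ?_ (ne_of_mem_aroots_of_isCoprime hcop hz hw)
    · rw [map_mul, (mem_aroots.mp hz).2, zero_mul]
    · rw [map_mul, (mem_aroots.mp hw).2, mul_zero]
  subst hd
  rw [← mul_pow]
  refine pow_min_le_abs_homEval_mul hf hg hv0 hne ?_ ?_
  · exact (inv_mul_cancel₀ hc0.ne').symm.le.trans (mul_le_mul_of_nonneg_right hbig hc0.le)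
  rcases le_or_gt |u| v with huv | huv
  · rw [max_eq_right huv, ← abs_of_pos (by exact_mod_cast hv : (0 : ℝ) < v)]
    exact pow_le_abs_homEval_or_of_le_norm_sub hf hg hv0 hc0.le
      fun z hz w hw => (hroots z hz w hw).1
  · rw [max_eq_left huv.le, Int.cast_abs]
    exact pow_le_abs_homEval_or_of_le_norm_inv_sub hf hg hv0 hc0.le (by linarith)
      fun z hz w hw => (hroots z hz w hw).2

/-- Let `f, g ∈ ℤ[x]` be coprime polynomials with `ψ² = f g`, and suppose any two distinct
roots `x₀ ≠ x₁` of `ψ²` satisfy `|x₀ − x₁| ≥ ε` and (when nonzero) `|x₀⁻¹ − x₁⁻¹| ≥ ε`,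
where `0 < ε ≤ 2`. Let `u, v` be coprime integers with `v ≥ 1`,
`max(|u|, v) ≥ (ε/2)⁻¹`, and `ψ²(u,v) ≠ 0`. Then
`|ψ²(u,v)| ≥ max(|u|, v)^d (ε/2)^d` where `d = min(deg f, deg g)`. -/
theorem stmt_18 (f g : Polynomial ℤ) (hf : f ≠ 0) (hg : g ≠ 0)
    (hcop : IsCoprime (f.map (Int.castRingHom ℚ)) (g.map (Int.castRingHom ℚ)))
    (ε : ℝ) (hε0 : 0 < ε) (hε2 : ε ≤ 2)
    (hsep : ∀ x₀ x₁ : ℂ, aeval x₀ (f * g) = 0 → aeval x₁ (f * g) = 0 → x₀ ≠ x₁ →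
      ε ≤ ‖x₀ - x₁‖ ∧
        (x₀ ≠ 0 → x₁ ≠ 0 → ε ≤ ‖x₀⁻¹ - x₁⁻¹‖))
    (u v : ℤ) (hcopuv : IsCoprime u v) (hv : 1 ≤ v)
    (hbig : (ε / 2)⁻¹ ≤ ((max |u| v : ℤ) : ℝ))
    (hne : homEval (f * g) u v ≠ 0)
    (d : ℕ) (hd : d = min f.natDegree g.natDegree) :
    ((max |u| v : ℤ) : ℝ) ^ d * (ε / 2) ^ d ≤ |((homEval (f * g) u v : ℤ) : ℝ)| :=
  stmt_18_general f g hf hg hcop ε hε0 hε2 hsep u v hv hbig hne d hd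
end
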